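/- Let ψ₀ : ℝ² → ℝ be harmonic on the open set {ψ₀ > 0} with |∇ψ₀|² = λ² there for a constant λ > 0. Then all second derivatives of ψ₀ vanish on {ψ₀ > 0}; consequently ψ₀ is affine on each connected component of {ψ₀ > 0}. -/

import Mathlib

/-!
Differentiating the eikonal equation `(∂ₓψ)² + (∂_yψ)² = λ²` in the directions `x` and `y`
gives two linear equations for the Hessian entries `ψ_xx, ψ_xy, ψ_yy` with coefficients
`∂ₓψ, ∂_yψ`; harmonicity `ψ_xx + ψ_yy = 0` is a third. The determinant of this `3 × 3` system
is `|∇ψ|² = λ² ≠ 0`, so the Hessian vanishes. A function with vanishing second derivative on a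
connected open set has constant gradient there, hence is affine.
-/

/-- First partial derivative in the `x` direction. -/
noncomputable def dx (u : ℝ × ℝ → ℝ) (p : ℝ × ℝ) : ℝ := fderiv ℝ u p (1, 0)

/-- First partial derivative in the `y` direction. -/
noncomputable def dy (u : ℝ × ℝ → ℝ) (p : ℝ × ℝ) : ℝ := fderiv ℝ u p (0, 1)

/-- The Laplacian on `ℝ²`. -/
noncomputable def lap (u : ℝ × ℝ → ℝ) (p : ℝ × ℝ) : ℝ := dx (dx u) p + dy (dy u) p

open Filter Topology

section General

variable {𝕜 : Type*} [NontriviallyNormedField 𝕜]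
  {E : Type*} [NormedAddCommGroup E] [NormedSpace 𝕜 E]
  {F : Type*} [NormedAddCommGroup F] [NormedSpace 𝕜 F]

theorem hasFDerivAt_fderiv_apply {f : E → F} {x : E}
    (hf : DifferentiableAt 𝕜 (fderiv 𝕜 f) x) (v : E) :
    HasFDerivAt (fun y => fderiv 𝕜 f y v) ((fderiv 𝕜 (fderiv 𝕜 f) x).flip v) x := by
  simpa using hf.hasFDerivAt.clm_apply (hasFDerivAt_const v x)

theorem fderiv_fderiv_apply_eq {f : E → F} {x : E}
    (hf : DifferentiableAt 𝕜 (fderiv 𝕜 f) x) (v w : E) :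
    fderiv 𝕜 (fun y => fderiv 𝕜 f y v) x w = fderiv 𝕜 (fderiv 𝕜 f) x w v := by
  rw [(hasFDerivAt_fderiv_apply hf v).fderiv]
  rfl

end General

section Real

variable {E : Type*} [NormedAddCommGroup E] [NormedSpace ℝ E]
  {F : Type*} [NormedAddCommGroup F] [NormedSpace ℝ F]

theorem mul_fderiv_add_mul_fderiv_eq_zero {a b : E → ℝ} {a' b' : E →L[ℝ] ℝ} {x : E} {c : ℝ}
    (ha : HasFDerivAt a a' x) (hb : HasFDerivAt b b' x)
    (hc : ∀ᶠ y in 𝓝 x, a y ^ 2 + b y ^ 2 = c) (w : E) :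
    a x * a' w + b x * b' w = 0 := by
  have hsum := (ha.mul ha).add (hb.mul hb)
  have hconst : HasFDerivAt (fun y => a y * a y + b y * b y) (0 : E →L[ℝ] ℝ) x :=
    (hasFDerivAt_const c x).congr_of_eventuallyEq
      (hc.mono fun y hy => by rw [← hy]; ring)
  have h := congrArg (fun L : E →L[ℝ] ℝ => L w) (hsum.unique hconst)
  simp only [add_apply, smul_apply, smul_eq_mul, zero_apply] at h
  linear_combination h / 2

theorem IsOpen.exists_eq_clm_add_of_fderiv_fderiv_eq_zero {f : E → F} {s : Set E}
    (hs : IsOpen s) (hs' : IsPreconnected s) (hf : ContDiffOn ℝ 2 f s)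
    (h : s.EqOn (fderiv ℝ (fderiv ℝ f)) 0) :
    ∃ (L : E →L[ℝ] F) (c : F), ∀ x ∈ s, f x = L x + c := by
  obtain ⟨L, hL⟩ := hs.exists_is_const_of_fderiv_eq_zero hs'
    ((hf.fderiv_of_isOpen hs (m := 1) le_rfl).differentiableOn one_ne_zero) h
  obtain ⟨c, hc⟩ := hs.exists_eq_add_of_fderiv_eq hs' (hf.differentiableOn two_ne_zero)
    L.differentiableOn fun x hx => by rw [hL x hx, L.fderiv]
  exact ⟨L, c, hc⟩

end Real

theorem eq_zero_of_harmonic_of_eikonal {p q r s t : ℝ} (hpq : p ^ 2 + q ^ 2 ≠ 0)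
    (h₁ : p * r + q * s = 0) (h₂ : p * s + q * t = 0) (h₃ : r + t = 0) :
    r = 0 ∧ s = 0 ∧ t = 0 := by
  have hr : (p ^ 2 + q ^ 2) * r = 0 := by linear_combination p * h₁ - q * h₂ + q ^ 2 * h₃
  have hs : (p ^ 2 + q ^ 2) * s = 0 := by linear_combination q * h₁ + p * h₂ - p * q * h₃
  have hr0 := (mul_eq_zero.1 hr).resolve_left hpq
  exact ⟨hr0, (mul_eq_zero.1 hs).resolve_left hpq, by linarith⟩

theorem ContinuousLinearMap.apply_prod_eq (L : ℝ × ℝ →L[ℝ] ℝ) (p : ℝ × ℝ) :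
    L p = L (1, 0) * p.1 + L (0, 1) * p.2 := by
  have hp : p = p.1 • ((1 : ℝ), (0 : ℝ)) + p.2 • ((0 : ℝ), (1 : ℝ)) := by ext <;> simp
  conv_lhs => rw [hp]
  rw [map_add, map_smul, map_smul, smul_eq_mul, smul_eq_mul, mul_comm, mul_comm p.2]

theorem fderiv_dx {u : ℝ × ℝ → ℝ} {x : ℝ × ℝ} (hu : DifferentiableAt ℝ (fderiv ℝ u) x)
    (w : ℝ × ℝ) : fderiv ℝ (dx u) x w = fderiv ℝ (fderiv ℝ u) x w (1, 0) :=
  fderiv_fderiv_apply_eq hu _ _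

theorem fderiv_dy {u : ℝ × ℝ → ℝ} {x : ℝ × ℝ} (hu : DifferentiableAt ℝ (fderiv ℝ u) x)
    (w : ℝ × ℝ) : fderiv ℝ (dy u) x w = fderiv ℝ (fderiv ℝ u) x w (0, 1) :=
  fderiv_fderiv_apply_eq hu _ _

theorem fderiv_fderiv_eq_zero_of_harmonic_of_eikonal {ψ : ℝ × ℝ → ℝ} {x : ℝ × ℝ} {c : ℝ}
    (hψ : ContDiffAt ℝ 2 ψ x) (hlap : lap ψ x = 0)
    (heik : ∀ᶠ y in 𝓝 x, dx ψ y ^ 2 + dy ψ y ^ 2 = c) (hc : c ≠ 0) :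
    fderiv ℝ (fderiv ℝ ψ) x = 0 := by
  set H := fderiv ℝ (fderiv ℝ ψ) x
  have hd : DifferentiableAt ℝ (fderiv ℝ ψ) x :=
    (hψ.fderiv_right (m := 1) le_rfl).differentiableAt one_ne_zero
  have hsymm : H (0, 1) (1, 0) = H (1, 0) (0, 1) := (hψ.isSymmSndFDerivAt (by simp)).eq _ _
  have heik' (w : ℝ × ℝ) : dx ψ x * H w (1, 0) + dy ψ x * H w (0, 1) = 0 :=
    mul_fderiv_add_mul_fderiv_eq_zero (hasFDerivAt_fderiv_apply hd _)
      (hasFDerivAt_fderiv_apply hd _) heik w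
  have hlap' : H (1, 0) (1, 0) + H (0, 1) (0, 1) = 0 := by
    rw [← fderiv_dx hd, ← fderiv_dy hd]
    exact hlap
  have hgrad : dx ψ x ^ 2 + dy ψ x ^ 2 ≠ 0 := heik.self_of_nhds ▸ hc
  obtain ⟨hxx, hxy, hyy⟩ := eq_zero_of_harmonic_of_eikonal hgrad (heik' (1, 0))
    (hsymm ▸ heik' (0, 1)) hlap'
  ext <;> simp [hxx, hxy, hyy, hsymm]

theorem stmt_8_general (ψ : ℝ × ℝ → ℝ) (lam : ℝ) (hlam : 0 < lam)
    (P : Set (ℝ × ℝ)) (hPo : IsOpen P)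
    (hsmooth : ContDiffOn ℝ 2 ψ P)
    (hharm : ∀ x ∈ P, lap ψ x = 0)
    (heik : ∀ x ∈ P, (dx ψ x) ^ 2 + (dy ψ x) ^ 2 = lam ^ 2) :
    (∀ x ∈ P, dx (dx ψ) x = 0 ∧ dx (dy ψ) x = 0 ∧ dy (dx ψ) x = 0 ∧ dy (dy ψ) x = 0) ∧
    ∀ x₀ ∈ P, ∃ a b c : ℝ, ∀ x ∈ connectedComponentIn P x₀,
      ψ x = a * x.1 + b * x.2 + c := by
  have hψ {x} (hx : x ∈ P) : ContDiffAt ℝ 2 ψ x := hsmooth.contDiffAt (hPo.mem_nhds hx)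
  have hH : P.EqOn (fderiv ℝ (fderiv ℝ ψ)) 0 := fun x hx =>
    fderiv_fderiv_eq_zero_of_harmonic_of_eikonal (hψ hx) (hharm x hx)
      (eventually_of_mem (hPo.mem_nhds hx) heik) (by positivity)
  refine ⟨fun x hx => ?_, fun x₀ _ => ?_⟩
  · have hd : DifferentiableAt ℝ (fderiv ℝ ψ) x :=
      ((hψ hx).fderiv_right (m := 1) le_rfl).differentiableAt one_ne_zero
    have h (w : ℝ × ℝ) : fderiv ℝ (dx ψ) x w = 0 ∧ fderiv ℝ (dy ψ) x w = 0 := by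
      simp [fderiv_dx hd, fderiv_dy hd, hH hx]
    exact ⟨(h _).1, (h _).2, (h _).1, (h _).2⟩
  · have hsub := connectedComponentIn_subset P x₀
    obtain ⟨L, c, hL⟩ := hPo.connectedComponentIn.exists_eq_clm_add_of_fderiv_fderiv_eq_zero
      isPreconnected_connectedComponentIn (hsmooth.mono hsub) (hH.mono hsub)
    exact ⟨L (1, 0), L (0, 1), c, fun x hx => by rw [hL x hx, L.apply_prod_eq]⟩

theorem stmt_8 (ψ : ℝ × ℝ → ℝ) (lam : ℝ) (hlam : 0 < lam)
    (P : Set (ℝ × ℝ)) (hP : P = {x | 0 < ψ x}) (hPo : IsOpen P)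
    (hsmooth : ContDiffOn ℝ 2 ψ P)
    (hharm : ∀ x ∈ P, lap ψ x = 0)
    (heik : ∀ x ∈ P, (dx ψ x) ^ 2 + (dy ψ x) ^ 2 = lam ^ 2) :
    (∀ x ∈ P, dx (dx ψ) x = 0 ∧ dx (dy ψ) x = 0 ∧ dy (dx ψ) x = 0 ∧ dy (dy ψ) x = 0) ∧
    ∀ x₀ ∈ P, ∃ a b c : ℝ, ∀ x ∈ connectedComponentIn P x₀,
      ψ x = a * x.1 + b * x.2 + c :=
  stmt_8_general ψ lam hlam P hPo hsmooth hharm heik
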